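/- arXiv:math/0510327 — 2 statements merged into one kernel-verified Lean document; each statement's English description precedes it below -/
import Mathlib

section
/- Let A and B be bounded operators on a complex Banach space, and suppose v and w are vectors with A v = λ v and A* w = μ̄ w (i.e. ⟨A x, w⟩ = μ ⟨x, w⟩ for all x) with λ ≠ μ. Then ⟨B v, w⟩ = (μ − λ)⁻¹ ⟨[A,B] v, w⟩, where [A,B] = AB − BA. Consequently, for every n ≥ 0, |⟨B v, w⟩| ≤ |μ − λ|^{-n} ‖ad_A^n B‖ ‖v‖ ‖w‖, where ad_A^0 B = B and ad_A^{n+1} B = [A, ad_A^n B]. -/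
open scoped InnerProductSpace

variable {H : Type*} [NormedAddCommGroup H] [InnerProductSpace ℂ H] [CompleteSpace H]

/-- Iterated commutator: `ad_A^0 B = B`, `ad_A^{n+1} B = [A, ad_A^n B]`. -/
def adOp (A : H →L[ℂ] H) : ℕ → (H →L[ℂ] H) → (H →L[ℂ] H)
  | 0, B => B
  | n + 1, B => A * adOp A n B - adOp A n B * A

lemma adOp_comm (A B : H →L[ℂ] H) (n : ℕ) :
    adOp A n (A * B - B * A) = adOp A (n + 1) B := by
  induction n with
  | zero => rfl
  | succ n ih => simp only [adOp, ih]

lemma key_identity (A B : H →L[ℂ] H) (v w : H) (lam mu : ℂ)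
    (hv : A v = lam • v) (hw : ∀ x : H, ⟪w, A x⟫_ℂ = mu * ⟪w, x⟫_ℂ)
    (hne : lam ≠ mu) :
    ⟪w, B v⟫_ℂ = (mu - lam)⁻¹ * ⟪w, (A * B - B * A) v⟫_ℂ := by
  have h1 : ⟪w, (A * B - B * A) v⟫_ℂ = (mu - lam) * ⟪w, B v⟫_ℂ := by
    have : (A * B - B * A) v = A (B v) - B (A v) := rfl
    rw [this, inner_sub_right, hw, hv, map_smul, inner_smul_right]
    ring
  rw [h1]
  field_simp [sub_ne_zero.mpr (Ne.symm hne)]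

/-- If `A v = λ v` and `A* w = μ̄ w` (i.e. `⟨w, A x⟩ = μ ⟨w, x⟩` for all `x`) with `λ ≠ μ`,
then `⟨w, B v⟩ = (μ − λ)⁻¹ ⟨w, [A,B] v⟩`, and consequently
`|⟨w, B v⟩| ≤ |μ − λ|⁻ⁿ ‖ad_A^n B‖ ‖v‖ ‖w‖` for every `n`. -/
theorem commutator_trick_matrix_elements
    (A B : H →L[ℂ] H) (v w : H) (lam mu : ℂ)
    (hv : A v = lam • v)
    (hw : ∀ x : H, ⟪w, A x⟫_ℂ = mu * ⟪w, x⟫_ℂ)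
    (hne : lam ≠ mu) :
    ⟪w, B v⟫_ℂ = (mu - lam)⁻¹ * ⟪w, (A * B - B * A) v⟫_ℂ ∧
      ∀ n : ℕ, ‖⟪w, B v⟫_ℂ‖
        ≤ ‖mu - lam‖⁻¹ ^ n * ‖adOp A n B‖ * ‖v‖ * ‖w‖ := by
  refine ⟨key_identity A B v w lam mu hv hw hne, ?_⟩
  intro n
  induction n generalizing B with
  | zero =>
    simp only [pow_zero, one_mul, adOp]
    calc ‖⟪w, B v⟫_ℂ‖ ≤ ‖w‖ * ‖B v‖ := by simpa using norm_inner_le_norm (𝕜 := ℂ) w (B v)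
      _ ≤ ‖w‖ * (‖B‖ * ‖v‖) := by
          exact mul_le_mul_of_nonneg_left (B.le_opNorm v) (norm_nonneg w)
      _ = ‖B‖ * ‖v‖ * ‖w‖ := by ring
  | succ n ih =>
    rw [key_identity A B v w lam mu hv hw hne]
    have hme : mu - lam ≠ 0 := sub_ne_zero.mpr (Ne.symm hne)
    rw [norm_mul, norm_inv]
    calc ‖mu - lam‖⁻¹ * ‖⟪w, (A * B - B * A) v⟫_ℂ‖
        ≤ ‖mu - lam‖⁻¹ *
          (‖mu - lam‖⁻¹ ^ n * ‖adOp A n (A * B - B * A)‖ * ‖v‖ * ‖w‖) := by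
          exact mul_le_mul_of_nonneg_left (ih _) (by positivity)
      _ = ‖mu - lam‖⁻¹ ^ (n + 1) * ‖adOp A (n + 1) B‖ * ‖v‖ * ‖w‖ := by
          rw [adOp_comm]; ring
end

section
/- Let ω : [0,1] → ℝ be differentiable with ε ≤ ω'(z) for all z ∈ [0,1], where ε > 0. Let q > 1, τ ∈ ℝ and 0 < γ. Then ∫₀¹ (|ω(z) − τ| + γ)^{-q} dz ≤ (2 / (ε (q−1))) γ^{1−q}. -/
open Set MeasureTheory

private lemma micro_aux (ω : ℝ → ℝ) (hω : Differentiable ℝ ω) (ε : ℝ) (hε : 0 < ε)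
    (hd : ∀ z ∈ Set.Icc (0 : ℝ) 1, ε ≤ deriv ω z)
    (q τ γ : ℝ) (hq : 1 < q) (hγ : 0 < γ)
    (a b : ℝ) (hab : a ≤ b) (hsub : Set.Icc a b ⊆ Set.Icc (0 : ℝ) 1)
    (s : ℝ) (hs : s = 1 ∨ s = -1)
    (hpos : ∀ z ∈ Set.Icc a b, 0 ≤ s * (ω z - τ)) :
    ∫ z in a..b, (|ω z - τ| + γ) ^ (-q) ≤ (1 / (ε * (q - 1))) * γ ^ (1 - q) := by
  have hss : s * s = 1 := by rcases hs with h | h <;> simp [h]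
  have habs : |s| = 1 := by rcases hs with h | h <;> simp [h]
  have hq1 : 0 < q - 1 := by linarith
  have hεq : 0 < ε * (q - 1) := mul_pos hε hq1
  set u : ℝ → ℝ := fun z => s * (ω z - τ) + γ with hu_def
  have hu_pos : ∀ z ∈ Set.Icc a b, 0 < u z := fun z hz => by
    have := hpos z hz; simp only [hu_def]; linarith
  set H : ℝ → ℝ := fun z => (s / (ε * (q - 1))) * (-(u z) ^ (1 - q)) with hH_def
  -- derivative of H at points of Icc a b
  have hH' : ∀ z ∈ Set.Icc a b,
      HasDerivAt H ((deriv ω z / ε) * (u z) ^ (-q)) z := by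
    intro z hz
    have hu' : HasDerivAt u (s * deriv ω z) z := by
      have := ((hω z).hasDerivAt.sub_const τ).const_mul s
      simpa [hu_def, mul_comm] using this.add_const γ
    have hbase : u z ≠ 0 := ne_of_gt (hu_pos z hz)
    have h1 : HasDerivAt (fun z => (u z) ^ (1 - q))
        ((1 - q) * (u z) ^ (1 - q - 1) * (s * deriv ω z)) z :=
      (Real.hasDerivAt_rpow_const (Or.inl hbase)).comp z hu'
    have h2 := (h1.neg).const_mul (s / (ε * (q - 1)))
    convert h2 using 1
    · rfl
    · rfl
    · rfl
    have he : (1 : ℝ) - q - 1 = -q := by ring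
    rw [he]
    have : (s / (ε * (q - 1))) * (-((1 - q) * (u z) ^ (-q) * (s * deriv ω z)))
        = (s * s) * ((deriv ω z / ε) * (u z) ^ (-q)) := by
      field_simp; ring
    rw [this, hss, one_mul]
  -- continuity / integrability of the integrand
  have hφcont : Continuous fun z => (|ω z - τ| + γ) ^ (-q) := by
    apply Continuous.rpow_const
    · exact (continuous_abs.comp (hω.continuous.sub continuous_const)).add continuous_const
    · intro x; left; positivity
  have key : ∫ z in a..b, (|ω z - τ| + γ) ^ (-q) ≤ H b - H a := by
    apply intervalIntegral.integral_le_sub_of_hasDeriv_right_of_le hab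
    · intro z hz
      exact ((hH' z hz).continuousAt).continuousWithinAt
    · intro z hz
      exact ((hH' z (Set.mem_Icc.mpr ⟨hz.1.le, hz.2.le⟩)).hasDerivWithinAt)
    · exact hφcont.integrableOn_Icc
    · intro z hz
      have hz' : z ∈ Set.Icc a b := ⟨hz.1.le, hz.2.le⟩
      have habs' : |ω z - τ| = s * (ω z - τ) := by
        rcases hs with h | h
        · subst h; simp only [one_mul] at hpos ⊢; exact abs_of_nonneg (hpos z hz')
        · subst h
          have := hpos z hz'
          rw [abs_of_nonpos (by linarith)]; ring
      have hupos := hu_pos z hz'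
      have h1 : (1 : ℝ) ≤ deriv ω z / ε :=
        (one_le_div hε).mpr (hd z (hsub hz'))
      calc (|ω z - τ| + γ) ^ (-q) = (u z) ^ (-q) := by rw [habs']
        _ = 1 * (u z) ^ (-q) := (one_mul _).symm
        _ ≤ (deriv ω z / ε) * (u z) ^ (-q) :=
            mul_le_mul_of_nonneg_right h1 (Real.rpow_nonneg hupos.le _)
  refine key.trans ?_
  -- bound H b - H a
  have hXY : ∀ z ∈ Set.Icc a b, (u z) ^ (1 - q) ≤ γ ^ (1 - q) := by
    intro z hz
    apply Real.rpow_le_rpow_of_nonpos hγ _ (by linarith)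
    have := hpos z hz; simp only [hu_def]; linarith
  have hXpos : (0:ℝ) < (u a) ^ (1 - q) :=
    Real.rpow_pos_of_pos (hu_pos a ⟨le_refl a, hab⟩) _
  have hYpos : (0:ℝ) < (u b) ^ (1 - q) :=
    Real.rpow_pos_of_pos (hu_pos b ⟨hab, le_refl b⟩) _
  have hXle := hXY a ⟨le_refl a, hab⟩
  have hYle := hXY b ⟨hab, le_refl b⟩
  have hdiff : H b - H a = (1 / (ε * (q - 1))) * (s * ((u a) ^ (1 - q) - (u b) ^ (1 - q))) := by
    simp only [hH_def]; ring
  rw [hdiff]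
  apply mul_le_mul_of_nonneg_left _ (by positivity)
  have habs2 : s * ((u a) ^ (1 - q) - (u b) ^ (1 - q))
      ≤ |(u a) ^ (1 - q) - (u b) ^ (1 - q)| := by
    calc s * ((u a) ^ (1 - q) - (u b) ^ (1 - q))
        ≤ |s * ((u a) ^ (1 - q) - (u b) ^ (1 - q))| := le_abs_self _
      _ = |(u a) ^ (1 - q) - (u b) ^ (1 - q)| := by rw [abs_mul, habs, one_mul]
  refine habs2.trans ?_
  rw [abs_sub_le_iff]
  constructor <;> linarith

/-- Resolvent-type integral estimate under microhyperbolicity: if `ω' ≥ ε > 0` on `[0,1]`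
and `q > 1`, `γ > 0`, then `∫₀¹ (|ω(z) − τ| + γ)^{-q} dz ≤ (2/(ε(q−1))) γ^{1−q}`. -/
theorem microhyperbolic_resolvent_integral_bound
    (ω : ℝ → ℝ) (hω : Differentiable ℝ ω) (ε : ℝ) (hε : 0 < ε)
    (hd : ∀ z ∈ Set.Icc (0 : ℝ) 1, ε ≤ deriv ω z)
    (q τ γ : ℝ) (hq : 1 < q) (hγ : 0 < γ) :
    ∫ z in (0 : ℝ)..1, (|ω z - τ| + γ) ^ (-q)
      ≤ (2 / (ε * (q - 1))) * γ ^ (1 - q) := by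
  have hq1 : 0 < q - 1 := by linarith
  have hεq : 0 < ε * (q - 1) := mul_pos hε hq1
  have hγq : (0:ℝ) < γ ^ (1 - q) := Real.rpow_pos_of_pos hγ _
  have hhalf : (1 / (ε * (q - 1))) * γ ^ (1 - q) + (1 / (ε * (q - 1))) * γ ^ (1 - q)
      = (2 / (ε * (q - 1))) * γ ^ (1 - q) := by ring
  have honele : (1 / (ε * (q - 1))) * γ ^ (1 - q) ≤ (2 / (ε * (q - 1))) * γ ^ (1 - q) := by
    apply mul_le_mul_of_nonneg_right _ hγq.le
    exact (div_le_div_iff_of_pos_right hεq).mpr one_le_two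
  have hmono : MonotoneOn ω (Set.Icc 0 1) := by
    apply (strictMonoOn_of_deriv_pos (convex_Icc 0 1) hω.continuous.continuousOn ?_).monotoneOn
    intro x hx
    rw [interior_Icc] at hx
    exact lt_of_lt_of_le hε (hd x ⟨hx.1.le, hx.2.le⟩)
  have hφcont : Continuous fun z => (|ω z - τ| + γ) ^ (-q) := by
    apply Continuous.rpow_const
    · exact (continuous_abs.comp (hω.continuous.sub continuous_const)).add continuous_const
    · intro x; left; positivity
  by_cases h0 : τ ≤ ω 0
  · refine (micro_aux ω hω ε hε hd q τ γ hq hγ 0 1 zero_le_one (subset_refl _) 1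
      (Or.inl rfl) ?_).trans honele
    intro z hz
    rw [one_mul]
    have := hmono (Set.left_mem_Icc.mpr zero_le_one) hz hz.1
    linarith
  by_cases h1 : ω 1 ≤ τ
  · refine (micro_aux ω hω ε hε hd q τ γ hq hγ 0 1 zero_le_one (subset_refl _) (-1)
      (Or.inr rfl) ?_).trans honele
    intro z hz
    have := hmono hz (Set.right_mem_Icc.mpr zero_le_one) hz.2
    nlinarith
  · have hl : ω 0 ≤ τ := (not_le.mp h0).le
    have hr : τ ≤ ω 1 := (not_le.mp h1).le
    obtain ⟨c, hc, hωc⟩ := intermediate_value_Icc zero_le_one hω.continuous.continuousOn ⟨hl, hr⟩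
    have hint : ∀ a b : ℝ, IntervalIntegrable (fun z => (|ω z - τ| + γ) ^ (-q)) volume a b :=
      fun a b => hφcont.intervalIntegrable a b
    rw [← intervalIntegral.integral_add_adjacent_intervals (hint 0 c) (hint c 1), ← hhalf]
    apply add_le_add
    · refine micro_aux ω hω ε hε hd q τ γ hq hγ 0 c hc.1
        (Set.Icc_subset_Icc le_rfl hc.2) (-1) (Or.inr rfl) ?_
      intro z hz
      have hz1 : z ∈ Set.Icc (0:ℝ) 1 := ⟨hz.1, hz.2.trans hc.2⟩
      have := hmono hz1 hc hz.2
      nlinarith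
    · refine micro_aux ω hω ε hε hd q τ γ hq hγ c 1 hc.2
        (Set.Icc_subset_Icc hc.1 le_rfl) 1 (Or.inl rfl) ?_
      intro z hz
      have hz1 : z ∈ Set.Icc (0:ℝ) 1 := ⟨hc.1.trans hz.1, hz.2⟩
      have := hmono hc hz1 hz.1
      rw [one_mul]
      linarith
end
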